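/- Let A be an associative unital algebra over ℂ with a comultiplication Δ. If there exist a faithful left integral and a faithful right integral on A, then the four linear maps on A ⊗ A determined by a ⊗ b ↦ Δ(a)(1 ⊗ b), a ⊗ b ↦ Δ(a)(b ⊗ 1), a ⊗ b ↦ (a ⊗ 1)Δ(b), and a ⊗ b ↦ (1 ⊗ a)Δ(b) are all injective. -/

import Mathlib

/-!
If `T1 Δ x = 0`, multiply by `Δ c` on the left and slice with the right integral `ψ`: since
`Δ c · Δ a (1 ⊗ b) = Δ (c a) (1 ⊗ b)`, invariance gives `(ψ (c ·) ⊗ id) x = 0` for every `c`.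
For any functional `g`, `ψ (c · (id ⊗ g) x) = g ((ψ (c ·) ⊗ id) x)`, so faithfulness of `ψ` kills
every slice `(id ⊗ g) x`, and slices by all functionals separate the points of `A ⊗ A` (take
coordinates in a basis). The other three maps are handled in the same way, with the sides and the
roles of `φ` and `ψ` exchanged.
-/

open TensorProduct

noncomputable section

variable {A : Type*} [Ring A] [Algebra ℂ A]

/-- The slice map `id ⊗ ω : A ⊗ A → A`. -/
def sliceR (ω : A →ₗ[ℂ] ℂ) : A ⊗[ℂ] A →ₗ[ℂ] A :=
  (TensorProduct.rid ℂ A).toLinearMap ∘ₗ TensorProduct.map LinearMap.id ω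

/-- The slice map `ω ⊗ id : A ⊗ A → A`. -/
def sliceL (ω : A →ₗ[ℂ] ℂ) : A ⊗[ℂ] A →ₗ[ℂ] A :=
  (TensorProduct.lid ℂ A).toLinearMap ∘ₗ TensorProduct.map ω LinearMap.id

/-- Coassociativity of a comultiplication `Δ : A → A ⊗ A`:
`(Δ ⊗ id) ∘ Δ = (id ⊗ Δ) ∘ Δ` (up to the associator). -/
def IsCoassoc (Δ : A →ₐ[ℂ] A ⊗[ℂ] A) : Prop :=
  ∀ a : A,
    TensorProduct.assoc ℂ A A A (TensorProduct.map Δ.toLinearMap LinearMap.id (Δ a)) =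
      TensorProduct.map LinearMap.id Δ.toLinearMap (Δ a)

/-- A left integral: a nonzero functional with `(id ⊗ φ)(Δ a) = φ(a)·1` for all `a`. -/
def IsLeftIntegral (Δ : A →ₐ[ℂ] A ⊗[ℂ] A) (φ : A →ₗ[ℂ] ℂ) : Prop :=
  φ ≠ 0 ∧ ∀ a : A, sliceR φ (Δ a) = φ a • (1 : A)

/-- A right integral: a nonzero functional with `(ψ ⊗ id)(Δ a) = ψ(a)·1` for all `a`. -/
def IsRightIntegral (Δ : A →ₐ[ℂ] A ⊗[ℂ] A) (ψ : A →ₗ[ℂ] ℂ) : Prop :=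
  ψ ≠ 0 ∧ ∀ a : A, sliceL ψ (Δ a) = ψ a • (1 : A)

/-- A faithful functional: the bilinear form `(a, b) ↦ ω(ab)` is non-degenerate. -/
def IsFaithful (ω : A →ₗ[ℂ] ℂ) : Prop :=
  (∀ b : A, (∀ a : A, ω (a * b) = 0) → b = 0) ∧
  (∀ b : A, (∀ a : A, ω (b * a) = 0) → b = 0)

/-- The left leg of an element `x ∈ A ⊗ A`: the span of `{(id ⊗ ω)(x) : ω ∈ A*}`. -/
def leftLegOf (x : A ⊗[ℂ] A) : Submodule ℂ A :=
  Submodule.span ℂ {y : A | ∃ ω : A →ₗ[ℂ] ℂ, y = sliceR ω x}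

/-- The right leg of an element `x ∈ A ⊗ A`: the span of `{(ω ⊗ id)(x) : ω ∈ A*}`. -/
def rightLegOf (x : A ⊗[ℂ] A) : Submodule ℂ A :=
  Submodule.span ℂ {y : A | ∃ ω : A →ₗ[ℂ] ℂ, y = sliceL ω x}

/-- The left leg of `Δ`: the span of `{(id ⊗ ω)(Δ a) : a ∈ A, ω ∈ A*}`. -/
def leftLeg (Δ : A →ₐ[ℂ] A ⊗[ℂ] A) : Submodule ℂ A :=
  Submodule.span ℂ {y : A | ∃ (a : A) (ω : A →ₗ[ℂ] ℂ), y = sliceR ω (Δ a)}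

/-- The right leg of `Δ`: the span of `{(ω ⊗ id)(Δ a) : a ∈ A, ω ∈ A*}`. -/
def rightLeg (Δ : A →ₐ[ℂ] A ⊗[ℂ] A) : Submodule ℂ A :=
  Submodule.span ℂ {y : A | ∃ (a : A) (ω : A →ₗ[ℂ] ℂ), y = sliceL ω (Δ a)}

/-- A comultiplication is full if both of its legs are all of `A`. -/
def IsFull (Δ : A →ₐ[ℂ] A ⊗[ℂ] A) : Prop :=
  leftLeg Δ = ⊤ ∧ rightLeg Δ = ⊤

/-- The linear map `T₁` with `T₁ (a ⊗ b) = Δ(a) * (1 ⊗ b)`. -/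
def T1 (Δ : A →ₐ[ℂ] A ⊗[ℂ] A) : A ⊗[ℂ] A →ₗ[ℂ] A ⊗[ℂ] A :=
  LinearMap.mul' ℂ (A ⊗[ℂ] A) ∘ₗ
    TensorProduct.map Δ.toLinearMap (TensorProduct.mk ℂ A A 1)

/-- The linear map `T₁'` with `T₁' (a ⊗ b) = Δ(a) * (b ⊗ 1)`. -/
def T1' (Δ : A →ₐ[ℂ] A ⊗[ℂ] A) : A ⊗[ℂ] A →ₗ[ℂ] A ⊗[ℂ] A :=
  LinearMap.mul' ℂ (A ⊗[ℂ] A) ∘ₗ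
    TensorProduct.map Δ.toLinearMap ((TensorProduct.mk ℂ A A).flip 1)

/-- The linear map `T₂` with `T₂ (a ⊗ b) = (a ⊗ 1) * Δ(b)`. -/
def T2 (Δ : A →ₐ[ℂ] A ⊗[ℂ] A) : A ⊗[ℂ] A →ₗ[ℂ] A ⊗[ℂ] A :=
  LinearMap.mul' ℂ (A ⊗[ℂ] A) ∘ₗ
    TensorProduct.map ((TensorProduct.mk ℂ A A).flip 1) Δ.toLinearMap

/-- The linear map `T₂'` with `T₂' (a ⊗ b) = (1 ⊗ a) * Δ(b)`. -/
def T2' (Δ : A →ₐ[ℂ] A ⊗[ℂ] A) : A ⊗[ℂ] A →ₗ[ℂ] A ⊗[ℂ] A :=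
  LinearMap.mul' ℂ (A ⊗[ℂ] A) ∘ₗ
    TensorProduct.map (TensorProduct.mk ℂ A A 1) Δ.toLinearMap

/-- A left cointegral: a nonzero element `h` with `Δ(a)(1 ⊗ h) = a ⊗ h` for all `a`. -/
def IsLeftCointegral (Δ : A →ₐ[ℂ] A ⊗[ℂ] A) (h : A) : Prop :=
  h ≠ 0 ∧ ∀ a : A, Δ a * ((1 : A) ⊗ₜ[ℂ] h) = a ⊗ₜ[ℂ] h

/-- A right cointegral: a nonzero element `k` with `(k ⊗ 1)Δ(a) = k ⊗ a` for all `a`. -/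
def IsRightCointegral (Δ : A →ₐ[ℂ] A ⊗[ℂ] A) (k : A) : Prop :=
  k ≠ 0 ∧ ∀ a : A, (k ⊗ₜ[ℂ] (1 : A)) * Δ a = k ⊗ₜ[ℂ] a

/-- `Δ₁₃(a) = (1 ⊗ σ)(Δ(a) ⊗ 1)`, viewed in `A ⊗ (A ⊗ A)`. -/
def delta13 (Δ : A →ₐ[ℂ] A ⊗[ℂ] A) (a : A) : A ⊗[ℂ] (A ⊗[ℂ] A) :=
  TensorProduct.map LinearMap.id (TensorProduct.comm ℂ A A).toLinearMap
    (TensorProduct.assoc ℂ A A A (Δ a ⊗ₜ[ℂ] (1 : A)))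

open LinearMap

@[simp]
lemma sliceR_tmul (ω : A →ₗ[ℂ] ℂ) (a b : A) : sliceR ω (a ⊗ₜ[ℂ] b) = ω b • a := by
  simp [sliceR]

@[simp]
lemma sliceL_tmul (ω : A →ₗ[ℂ] ℂ) (a b : A) : sliceL ω (a ⊗ₜ[ℂ] b) = ω a • b := by
  simp [sliceL]

lemma sliceR_mul_tmul_one (ω : A →ₗ[ℂ] ℂ) (y : A ⊗[ℂ] A) (b : A) :
    sliceR ω (y * (b ⊗ₜ[ℂ] (1 : A))) = sliceR ω y * b := by
  induction y using TensorProduct.induction_on with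
  | zero => simp
  | tmul p q => simp
  | add u v hu hv => simp [add_mul, hu, hv]

lemma sliceR_tmul_one_mul (ω : A →ₗ[ℂ] ℂ) (a : A) (y : A ⊗[ℂ] A) :
    sliceR ω ((a ⊗ₜ[ℂ] (1 : A)) * y) = a * sliceR ω y := by
  induction y using TensorProduct.induction_on with
  | zero => simp
  | tmul p q => simp
  | add u v hu hv => simp [mul_add, hu, hv]

lemma sliceL_mul_one_tmul (ω : A →ₗ[ℂ] ℂ) (y : A ⊗[ℂ] A) (b : A) :
    sliceL ω (y * ((1 : A) ⊗ₜ[ℂ] b)) = sliceL ω y * b := by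
  induction y using TensorProduct.induction_on with
  | zero => simp
  | tmul p q => simp
  | add u v hu hv => simp [add_mul, hu, hv]

lemma sliceL_one_tmul_mul (ω : A →ₗ[ℂ] ℂ) (a : A) (y : A ⊗[ℂ] A) :
    sliceL ω (((1 : A) ⊗ₜ[ℂ] a) * y) = a * sliceL ω y := by
  induction y using TensorProduct.induction_on with
  | zero => simp
  | tmul p q => simp
  | add u v hu hv => simp [mul_add, hu, hv]

lemma eq_zero_of_forall_sliceR_eq_zero {x : A ⊗[ℂ] A} (h : ∀ ω, sliceR ω x = 0) : x = 0 := by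
  classical
  let b := Module.Basis.ofVectorSpace ℂ A
  refine (equivFinsuppOfBasisRight b).map_eq_zero_iff.1 (Finsupp.ext fun i => ?_)
  rw [equivFinsuppOfBasisRight_apply]
  exact h (b.coord i)

lemma eq_zero_of_forall_sliceL_eq_zero {x : A ⊗[ℂ] A} (h : ∀ ω, sliceL ω x = 0) : x = 0 := by
  classical
  let b := Module.Basis.ofVectorSpace ℂ A
  refine (equivFinsuppOfBasisLeft b).map_eq_zero_iff.1 (Finsupp.ext fun i => ?_)
  rw [equivFinsuppOfBasisLeft_apply]
  exact h (b.coord i)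

lemma apply_mul_sliceR (ω g : A →ₗ[ℂ] ℂ) (c : A) (x : A ⊗[ℂ] A) :
    ω (c * sliceR g x) = g (sliceL (ω ∘ₗ mulLeft ℂ c) x) := by
  induction x using TensorProduct.induction_on with
  | zero => simp
  | tmul p q => simp [mul_comm]
  | add u v hu hv => simp [mul_add, hu, hv]

lemma apply_sliceL_mul (ω f : A →ₗ[ℂ] ℂ) (c : A) (x : A ⊗[ℂ] A) :
    ω (sliceL f x * c) = f (sliceR (ω ∘ₗ mulRight ℂ c) x) := by
  induction x using TensorProduct.induction_on with
  | zero => simp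
  | tmul p q => simp [mul_comm]
  | add u v hu hv => simp [add_mul, hu, hv]

lemma eq_zero_of_forall_sliceL_mulLeft_eq_zero {ω : A →ₗ[ℂ] ℂ}
    (hω : ∀ b : A, (∀ a : A, ω (a * b) = 0) → b = 0) {x : A ⊗[ℂ] A}
    (hx : ∀ c : A, sliceL (ω ∘ₗ mulLeft ℂ c) x = 0) : x = 0 :=
  eq_zero_of_forall_sliceR_eq_zero fun g =>
    hω _ fun c => by rw [apply_mul_sliceR, hx, map_zero]

lemma eq_zero_of_forall_sliceR_mulRight_eq_zero {ω : A →ₗ[ℂ] ℂ}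
    (hω : ∀ b : A, (∀ a : A, ω (b * a) = 0) → b = 0) {x : A ⊗[ℂ] A}
    (hx : ∀ c : A, sliceR (ω ∘ₗ mulRight ℂ c) x = 0) : x = 0 :=
  eq_zero_of_forall_sliceL_eq_zero fun f =>
    hω _ fun c => by rw [apply_sliceL_mul, hx, map_zero]

section CanonicalMaps

variable {Δ : A →ₐ[ℂ] A ⊗[ℂ] A} {φ ψ : A →ₗ[ℂ] ℂ}

lemma T1_tmul (a b : A) : T1 Δ (a ⊗ₜ[ℂ] b) = Δ a * ((1 : A) ⊗ₜ[ℂ] b) := by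
  simp [T1]

lemma T1'_tmul (a b : A) : T1' Δ (a ⊗ₜ[ℂ] b) = Δ a * (b ⊗ₜ[ℂ] (1 : A)) := by
  simp [T1']

lemma T2_tmul (a b : A) : T2 Δ (a ⊗ₜ[ℂ] b) = (a ⊗ₜ[ℂ] (1 : A)) * Δ b := by
  simp [T2]

lemma T2'_tmul (a b : A) : T2' Δ (a ⊗ₜ[ℂ] b) = ((1 : A) ⊗ₜ[ℂ] a) * Δ b := by
  simp [T2']

lemma sliceL_mul_T1 (hψ : ∀ a, sliceL ψ (Δ a) = ψ a • (1 : A)) (c : A) (x : A ⊗[ℂ] A) :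
    sliceL ψ (Δ c * T1 Δ x) = sliceL (ψ ∘ₗ mulLeft ℂ c) x := by
  induction x using TensorProduct.induction_on with
  | zero => simp
  | tmul a b => simp [T1_tmul, ← mul_assoc, ← map_mul, sliceL_mul_one_tmul, hψ]
  | add u v hu hv => simp [mul_add, hu, hv]

lemma sliceR_mul_T1' (hφ : ∀ a, sliceR φ (Δ a) = φ a • (1 : A)) (c : A) (x : A ⊗[ℂ] A) :
    sliceR φ (Δ c * T1' Δ x) = sliceL (φ ∘ₗ mulLeft ℂ c) x := by
  induction x using TensorProduct.induction_on with
  | zero => simp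
  | tmul a b => simp [T1'_tmul, ← mul_assoc, ← map_mul, sliceR_mul_tmul_one, hφ]
  | add u v hu hv => simp [mul_add, hu, hv]

lemma sliceR_T2_mul (hφ : ∀ a, sliceR φ (Δ a) = φ a • (1 : A)) (c : A) (x : A ⊗[ℂ] A) :
    sliceR φ (T2 Δ x * Δ c) = sliceR (φ ∘ₗ mulRight ℂ c) x := by
  induction x using TensorProduct.induction_on with
  | zero => simp
  | tmul a b => simp [T2_tmul, mul_assoc, ← map_mul, sliceR_tmul_one_mul, hφ]
  | add u v hu hv => simp [add_mul, hu, hv]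

lemma sliceL_T2'_mul (hψ : ∀ a, sliceL ψ (Δ a) = ψ a • (1 : A)) (c : A) (x : A ⊗[ℂ] A) :
    sliceL ψ (T2' Δ x * Δ c) = sliceR (ψ ∘ₗ mulRight ℂ c) x := by
  induction x using TensorProduct.induction_on with
  | zero => simp
  | tmul a b => simp [T2'_tmul, mul_assoc, ← map_mul, sliceL_one_tmul_mul, hψ]
  | add u v hu hv => simp [add_mul, hu, hv]

theorem T1_injective (hψ : ∀ a, sliceL ψ (Δ a) = ψ a • (1 : A))
    (hψf : ∀ b : A, (∀ a : A, ψ (a * b) = 0) → b = 0) : Function.Injective (T1 Δ) :=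
  (injective_iff_map_eq_zero _).2 fun x hx =>
    eq_zero_of_forall_sliceL_mulLeft_eq_zero hψf fun c => by
      rw [← sliceL_mul_T1 hψ, hx, mul_zero, map_zero]

theorem T1'_injective (hφ : ∀ a, sliceR φ (Δ a) = φ a • (1 : A))
    (hφf : ∀ b : A, (∀ a : A, φ (a * b) = 0) → b = 0) : Function.Injective (T1' Δ) :=
  (injective_iff_map_eq_zero _).2 fun x hx =>
    eq_zero_of_forall_sliceL_mulLeft_eq_zero hφf fun c => by
      rw [← sliceR_mul_T1' hφ, hx, mul_zero, map_zero]

theorem T2_injective (hφ : ∀ a, sliceR φ (Δ a) = φ a • (1 : A))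
    (hφf : ∀ b : A, (∀ a : A, φ (b * a) = 0) → b = 0) : Function.Injective (T2 Δ) :=
  (injective_iff_map_eq_zero _).2 fun x hx =>
    eq_zero_of_forall_sliceR_mulRight_eq_zero hφf fun c => by
      rw [← sliceR_T2_mul hφ, hx, zero_mul, map_zero]

theorem T2'_injective (hψ : ∀ a, sliceL ψ (Δ a) = ψ a • (1 : A))
    (hψf : ∀ b : A, (∀ a : A, ψ (b * a) = 0) → b = 0) : Function.Injective (T2' Δ) :=
  (injective_iff_map_eq_zero _).2 fun x hx =>
    eq_zero_of_forall_sliceR_mulRight_eq_zero hψf fun c => by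
      rw [← sliceL_T2'_mul hψ, hx, zero_mul, map_zero]

end CanonicalMaps

theorem four_canonical_maps_injective_general
    (Δ : A →ₐ[ℂ] A ⊗[ℂ] A)
    (φ : A →ₗ[ℂ] ℂ) (hφ : IsLeftIntegral Δ φ) (hφf : IsFaithful φ)
    (ψ : A →ₗ[ℂ] ℂ) (hψ : IsRightIntegral Δ ψ) (hψf : IsFaithful ψ) :
    Function.Injective (T1 Δ) ∧ Function.Injective (T1' Δ) ∧
      Function.Injective (T2 Δ) ∧ Function.Injective (T2' Δ) :=
  ⟨T1_injective hψ.2 hψf.1, T1'_injective hφ.2 hφf.1, T2_injective hφ.2 hφf.2,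
    T2'_injective hψ.2 hψf.2⟩

/-- If there are a faithful left integral and a faithful right integral, the four maps
`a ⊗ b ↦ Δ(a)(1 ⊗ b)`, `a ⊗ b ↦ Δ(a)(b ⊗ 1)`, `a ⊗ b ↦ (a ⊗ 1)Δ(b)`, `a ⊗ b ↦ (1 ⊗ a)Δ(b)`
are all injective. -/
theorem four_canonical_maps_injective
    (Δ : A →ₐ[ℂ] A ⊗[ℂ] A) (hΔ : IsCoassoc Δ)
    (φ : A →ₗ[ℂ] ℂ) (hφ : IsLeftIntegral Δ φ) (hφf : IsFaithful φ)
    (ψ : A →ₗ[ℂ] ℂ) (hψ : IsRightIntegral Δ ψ) (hψf : IsFaithful ψ) :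
    Function.Injective (T1 Δ) ∧ Function.Injective (T1' Δ) ∧
      Function.Injective (T2 Δ) ∧ Function.Injective (T2' Δ) :=
  four_canonical_maps_injective_general Δ φ hφ hφf ψ hψ hψf
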